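/- Let 1 < p < ∞, ω > 0 and ω_p = 4/((p-1)(p+3)). For every v ∈ H¹(ℝ) one has the quadratic-form lower bound ∫_ℝ (|v'(x)|² + ω|v(x)|² - p R_ω(x)^{p-1}|v(x)|²) dx ≥ -(ω/ω_p) ∫_ℝ |v(x)|² dx; i.e., the Schrödinger operator L_{ω,+,0} = -d²/dx² + ω - p R_ω^{p-1} is bounded below by -ω/ω_p. -/

import Mathlib

/-!
The ground state of `L = -d²/dx² + ω - p R_ω^{p-1}` is `R_ω^{(p+1)/2}`, with eigenvalue `-ω/ω_p`.
Its logarithmic derivative `W = -b tanh (k x)`, `b = (p+1)√ω/2`, `k = (p-1)√ω/2`, solves the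
Riccati equation `W² + W' = ω - p R_ω^{p-1} + ω/ω_p`, so that
`v'² + (ω - p R_ω^{p-1}) v² + (ω/ω_p) v² = (v' - W v)² + (W v²)'`.
Since `W` and `W'` are bounded, `(W v²)'` is integrable with integral zero for `v ∈ H¹`.
-/

open MeasureTheory Real

noncomputable section

/-- The line soliton `R_ω(x) = ((p+1)ω/2)^{1/(p-1)} · sech^{2/(p-1)}((p-1)√ω·x/2)`. -/
def Rsol (p ω : ℝ) (x : ℝ) : ℝ :=
  ((p + 1) * ω / 2) ^ (1 / (p - 1)) *
    Real.cosh ((p - 1) * Real.sqrt ω / 2 * x) ^ (-(2 / (p - 1)))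

/-- The critical frequency `ω_p = 4/((p-1)(p+3))`. -/
def omegaCrit (p : ℝ) : ℝ := 4 / ((p - 1) * (p + 3))

/-- Membership in `H¹(ℝ)` for a real-valued function, formulated with the
classical derivative. -/
structure MemH1 (v : ℝ → ℝ) : Prop where
  diff : Differentiable ℝ v
  memL2 : MemLp v 2 volume
  deriv_memL2 : MemLp (deriv v) 2 volume

theorem Real.hasDerivAt_tanh (x : ℝ) : HasDerivAt tanh (1 / cosh x ^ 2) x := by
  have h := (hasDerivAt_sinh x).div (hasDerivAt_cosh x) (cosh_pos x).ne'
  rw [show tanh = sinh / cosh from funext tanh_eq_sinh_div_cosh]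
  refine h.congr_deriv ?_
  rw [← cosh_sq_sub_sinh_sq x]
  ring

theorem hasDerivAt_const_mul_tanh_mul (a k x : ℝ) :
    HasDerivAt (fun y => a * tanh (k * y)) (a * k / cosh (k * x) ^ 2) x := by
  have h := ((hasDerivAt_tanh (k * x)).comp x ((hasDerivAt_id x).const_mul k)).const_mul a
  exact h.congr_deriv (by ring)

theorem abs_mul_tanh_le (a x : ℝ) : |a * tanh x| ≤ |a| := by
  rw [abs_mul]
  exact mul_le_of_le_one_right (abs_nonneg a) (abs_tanh_lt_one x).le

theorem abs_div_cosh_sq_le (a x : ℝ) : |a / cosh x ^ 2| ≤ |a| := by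
  rw [abs_div, abs_of_pos (pow_pos (cosh_pos x) 2)]
  exact div_le_self (abs_nonneg a) (one_le_pow₀ (one_le_cosh x))

theorem Rsol_rpow_sub_one {p ω : ℝ} (hp : 1 < p) (hω : 0 ≤ ω) (x : ℝ) :
    Rsol p ω x ^ (p - 1) = (p + 1) * ω / 2 / cosh ((p - 1) * √ω / 2 * x) ^ 2 := by
  have hA : 0 ≤ (p + 1) * ω / 2 := by positivity
  have hC : 0 ≤ cosh ((p - 1) * √ω / 2 * x) := (cosh_pos _).le
  have hp1 : p - 1 ≠ 0 := sub_ne_zero.mpr hp.ne'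
  rw [Rsol, mul_rpow (rpow_nonneg hA _) (rpow_nonneg hC _), ← rpow_mul hA, ← rpow_mul hC,
    one_div_mul_cancel hp1, rpow_one, neg_mul, div_mul_cancel₀ _ hp1, rpow_neg hC,
    rpow_two]
  ring

theorem Rsol_riccati {p ω : ℝ} (hp : 1 < p) (hω : 0 ≤ ω) (x : ℝ) :
    ω - p * Rsol p ω x ^ (p - 1) + ω / omegaCrit p
      = (-((p + 1) * √ω / 2) * tanh ((p - 1) * √ω / 2 * x)) ^ 2
        + -((p + 1) * √ω / 2) * ((p - 1) * √ω / 2) / cosh ((p - 1) * √ω / 2 * x) ^ 2 := by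
  rw [Rsol_rpow_sub_one hp hω, omegaCrit, tanh_eq_sinh_div_cosh]
  obtain ⟨t, ht, rfl⟩ : ∃ t, 0 ≤ t ∧ ω = t ^ 2 := ⟨√ω, sqrt_nonneg ω, (sq_sqrt hω).symm⟩
  rw [sqrt_sq ht]
  set y := (p - 1) * t / 2 * x
  have hC : cosh y ≠ 0 := (cosh_pos y).ne'
  have hp3 : (p - 1) * (p + 3) ≠ 0 := mul_ne_zero (by linarith) (by linarith)
  field_simp
  linear_combination 4 * t ^ 2 * (p + 1) ^ 2 * cosh_sq_sub_sinh_sq y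

section GroundState

variable {v W W' : ℝ → ℝ} {B B' : ℝ}

theorem measurable_of_forall_hasDerivAt (hW : ∀ x, HasDerivAt W (W' x) x) : Measurable W' := by
  rw [show W' = deriv W from funext fun x => (hW x).deriv.symm]
  exact measurable_deriv W

theorem MemH1.integrable_mul_deriv (hv : MemH1 v) : Integrable (fun x => v x * deriv v x) :=
  hv.memL2.integrable_mul hv.deriv_memL2

theorem MemH1.integrable_mul_sq_deriv (hv : MemH1 v) (hWm : AEStronglyMeasurable W)
    (hW'm : AEStronglyMeasurable W') (hWB : ∀ x, |W x| ≤ B) (hW'B : ∀ x, |W' x| ≤ B') :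
    Integrable fun x => W' x * v x ^ 2 + W x * (2 * (v x * deriv v x)) :=
  (hv.memL2.integrable_sq.bdd_mul hW'm (.of_forall hW'B)).add
    ((hv.integrable_mul_deriv.const_mul 2).bdd_mul hWm (.of_forall hWB))

theorem MemH1.integral_mul_sq_deriv_eq_zero (hv : MemH1 v) (hW : ∀ x, HasDerivAt W (W' x) x)
    (hWB : ∀ x, |W x| ≤ B) (hW'B : ∀ x, |W' x| ≤ B') :
    ∫ x, (W' x * v x ^ 2 + W x * (2 * (v x * deriv v x))) = 0 := by
  have hWm : AEStronglyMeasurable W :=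
    (Differentiable.continuous fun x => (hW x).differentiableAt).aestronglyMeasurable
  refine integral_eq_zero_of_hasDerivAt_of_integrable (f := fun x => W x * v x ^ 2)
    (fun x => ?_) (hv.integrable_mul_sq_deriv hWm
      (measurable_of_forall_hasDerivAt hW).aestronglyMeasurable hWB hW'B)
    (hv.memL2.integrable_sq.bdd_mul hWm (.of_forall hWB))
  refine ((hW x).mul ((hv.diff x).hasDerivAt.pow 2)).congr_deriv ?_
  simp only [Pi.pow_apply, Nat.cast_ofNat, pow_one, Nat.add_one_sub_one]
  ring

theorem MemH1.neg_mul_integral_sq_le_of_riccati (hv : MemH1 v)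
    (hW : ∀ x, HasDerivAt W (W' x) x) (hWB : ∀ x, |W x| ≤ B) (hW'B : ∀ x, |W' x| ≤ B')
    {V : ℝ → ℝ} {c : ℝ} (hV : ∀ x, V x + c = W x ^ 2 + W' x) :
    -c * ∫ x, v x ^ 2 ≤ ∫ x, (deriv v x ^ 2 + V x * v x ^ 2) := by
  have hWm : AEStronglyMeasurable W :=
    (Differentiable.continuous fun x => (hW x).differentiableAt).aestronglyMeasurable
  have hWv : MemLp (fun x => W x * v x) 2 :=
    hv.memL2.of_le_mul (c := B) (hWm.mul hv.memL2.aestronglyMeasurable)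
      (.of_forall fun x => (norm_mul _ _).trans_le
        (mul_le_mul_of_nonneg_right (hWB x) (norm_nonneg _)))
  have hsquare : Integrable fun x => (deriv v x - W x * v x) ^ 2 :=
    (hv.deriv_memL2.sub hWv).integrable_sq
  have hbdry : Integrable fun x => W' x * v x ^ 2 + W x * (2 * (v x * deriv v x)) :=
    hv.integrable_mul_sq_deriv hWm (measurable_of_forall_hasDerivAt hW).aestronglyMeasurable
      hWB hW'B
  have hsquare_nonneg : 0 ≤ ∫ x, (deriv v x - W x * v x) ^ 2 :=
    integral_nonneg fun x => sq_nonneg _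
  have hcompleted : ∀ x, deriv v x ^ 2 + V x * v x ^ 2
      = (deriv v x - W x * v x) ^ 2
        + (W' x * v x ^ 2 + W x * (2 * (v x * deriv v x))) - c * v x ^ 2 := fun x => by
    linear_combination v x ^ 2 * hV x
  calc -c * ∫ x, v x ^ 2
      ≤ (∫ x, (deriv v x - W x * v x) ^ 2) - c * ∫ x, v x ^ 2 := by linarith
    _ = (∫ x, (deriv v x - W x * v x) ^ 2)
          + (∫ x, (W' x * v x ^ 2 + W x * (2 * (v x * deriv v x)))) - c * ∫ x, v x ^ 2 := by
        rw [hv.integral_mul_sq_deriv_eq_zero hW hWB hW'B, add_zero]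
    _ = ∫ x, (deriv v x ^ 2 + V x * v x ^ 2) := by
        rw [← integral_add hsquare hbdry, ← integral_const_mul,
          ← integral_sub (f := fun x => _ + _) (hsquare.add hbdry)
            (hv.memL2.integrable_sq.const_mul c)]
        exact integral_congr_ae (.of_forall fun x => (hcompleted x).symm)

end GroundState

/-- for every `v ∈ H¹(ℝ)`, the quadratic form of the Schrödinger operator
`L_{ω,+,0} = -d²/dx² + ω - p·R_ω^{p-1}` satisfies
`∫ (|v'|² + ω|v|² - p R_ω^{p-1}|v|²) ≥ -(ω/ω_p) ∫ |v|²`. -/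
theorem Lplus_lower_bound (p ω : ℝ) (hp : 1 < p) (hω : 0 < ω) :
    ∀ v : ℝ → ℝ, MemH1 v →
      ∫ x : ℝ, (deriv v x ^ 2 + ω * v x ^ 2 - p * Rsol p ω x ^ (p - 1) * v x ^ 2)
        ≥ -(ω / omegaCrit p) * ∫ x : ℝ, v x ^ 2 := by
  intro v hv
  set b := (p + 1) * √ω / 2
  set k := (p - 1) * √ω / 2
  have h := hv.neg_mul_integral_sq_le_of_riccati (hasDerivAt_const_mul_tanh_mul (-b) k)
    (fun x => abs_mul_tanh_le (-b) (k * x)) (fun x => abs_div_cosh_sq_le (-b * k) (k * x))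
    (V := fun x => ω - p * Rsol p ω x ^ (p - 1)) (Rsol_riccati hp hω.le)
  simpa only [sub_mul, add_sub_assoc] using h
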